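/- arXiv:1402.2596 — 6 statements merged into one kernel-verified Lean document; each statement's English description precedes it below -/
import Mathlib

section
/- Let P be a probability measure on a Polish space Ω, ΔS : Ω → ℝ^d Borel with E_P|ΔS| < ∞, and H ⊆ ℝ^d a set of admissible strategies whose generated cone C = {cH : H ∈ proj_{N⊥(P)}(H), c ≥ 0} (projections onto the span N⊥(P) of the support of ΔS) is closed and convex. Assume NA(P): for all H ∈ H, H·ΔS ≥ 0 P-a.s. implies H·ΔS = 0 P-a.s. Then there exists a probability measure Q equivalent to P with bounded density dQ/dP such that E_Q|ΔS| < ∞ and E_Q[H·ΔS] ≤ 0 for every H ∈ H. -/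
/-!
Minimise the expected logistic loss `u x = E_P[log (1 + exp (-⟪x, ΔS⟫))]` over the cone `C`.
As `log (1 + e^{-t}) ≥ t⁻`, `u x ≥ E_P[⟪x, ΔS⟫⁻]`; the right side is positively homogeneous and,
by NA(P), positive on the compact set of unit vectors of `C`, so `u` grows linearly on `C` and
attains its minimum on `C` at some `H`. The loss has derivative `-σ(-t)`, `σ` the logistic sigmoid,
so the first-order condition at `H` is `E_P[σ(-⟪H, ΔS⟫) ⟪x, ΔS⟫] ≤ 0` for all `x ∈ C`: the
measure `Q` with density proportional to `σ(-⟪H, ΔS⟫) ∈ (0, 1)` works, since `⟪h, ΔS⟫` and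
`⟪proj h, ΔS⟫` agree `P`-a.s. (`ΔS` lies a.s. in the support of its law).
-/

open MeasureTheory Filter Set
open scoped RealInnerProductSpace ENNReal

noncomputable section

/-- The support of the law of `ΔS` under `P`. -/
def lawSupport {Ω : Type*} [MeasurableSpace Ω] {d : ℕ} (P : Measure Ω)
    (ΔS : Ω → EuclideanSpace ℝ (Fin d)) : Set (EuclideanSpace ℝ (Fin d)) :=
  ⋂₀ {A | IsClosed A ∧ ∀ᵐ ω ∂P, ΔS ω ∈ A}

/-- `N⊥(P)`, the span of the support of the law of `ΔS`. -/
def Nperp {Ω : Type*} [MeasurableSpace Ω] {d : ℕ} (P : Measure Ω)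
    (ΔS : Ω → EuclideanSpace ℝ (Fin d)) : Submodule ℝ (EuclideanSpace ℝ (Fin d)) :=
  Submodule.span ℝ (lawSupport P ΔS)

/-- The cone generated by the projection of the constraint set `𝓗` onto `N⊥(P)`. -/
def projCone {Ω : Type*} [MeasurableSpace Ω] {d : ℕ} (P : Measure Ω)
    (ΔS : Ω → EuclideanSpace ℝ (Fin d)) (𝓗 : Set (EuclideanSpace ℝ (Fin d))) :
    Set (EuclideanSpace ℝ (Fin d)) :=
  {x | ∃ c : ℝ, 0 ≤ c ∧ ∃ h ∈ 𝓗,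
    x = c • ((Submodule.orthogonalProjectionOnto (Nperp P ΔS) h : EuclideanSpace ℝ (Fin d)))}

open Real

def logisticLoss (t : ℝ) : ℝ := log (1 + exp (-t))

theorem hasDerivAt_logisticLoss (t : ℝ) : HasDerivAt logisticLoss (-sigmoid (-t)) t := by
  have h := ((hasDerivAt_neg' t).exp.const_add 1).log (by positivity)
  convert h using 1
  · rfl
  rw [← sigmoid_mul_rexp_neg, sigmoid_def]
  ring

theorem differentiable_logisticLoss : Differentiable ℝ logisticLoss :=
  fun t => (hasDerivAt_logisticLoss t).differentiableAt

theorem deriv_logisticLoss : deriv logisticLoss = fun t => -sigmoid (-t) :=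
  funext fun t => (hasDerivAt_logisticLoss t).deriv

theorem convexOn_logisticLoss : ConvexOn ℝ univ logisticLoss :=
  Monotone.convexOn_univ_of_deriv differentiable_logisticLoss <| by
    rw [deriv_logisticLoss]
    exact fun a b hab => neg_le_neg (sigmoid_le (neg_le_neg hab))

theorem lipschitzWith_logisticLoss : LipschitzWith 1 logisticLoss :=
  lipschitzWith_of_nnnorm_deriv_le differentiable_logisticLoss fun t => by
    rw [deriv_logisticLoss, ← NNReal.coe_le_coe, coe_nnnorm, norm_neg, Real.norm_eq_abs,
      abs_of_pos (sigmoid_pos _)]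
    exact sigmoid_le_one _

theorem negPart_le_logisticLoss (t : ℝ) : t⁻ ≤ logisticLoss t := by
  have h : exp (-t) ≤ 1 + exp (-t) := by linarith
  rw [negPart_def, logisticLoss]
  refine max_le ?_ (log_nonneg (by linarith [exp_pos (-t)]))
  simpa using log_le_log (exp_pos _) h

theorem ConvexOn.mul_sub_le_sub_of_hasDerivAt {f : ℝ → ℝ} {f' x : ℝ} (hf : ConvexOn ℝ univ f)
    (hd : HasDerivAt f f' x) (y : ℝ) : f' * (y - x) ≤ f y - f x := by
  rcases lt_trichotomy x y with hxy | rfl | hyx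
  · have := hf.le_slope_of_hasDerivAt (mem_univ x) (mem_univ y) hxy hd
    rwa [slope_def_field, le_div_iff₀ (sub_pos.2 hxy)] at this
  · simp
  · have := hf.slope_le_of_hasDerivAt (mem_univ y) (mem_univ x) hyx hd
    rw [slope_def_field, div_le_iff₀ (sub_pos.2 hyx)] at this
    linarith

theorem logisticLoss_sub_le (a b : ℝ) :
    logisticLoss b - logisticLoss a ≤ sigmoid (-b) * (a - b) := by
  have := convexOn_logisticLoss.mul_sub_le_sub_of_hasDerivAt (hasDerivAt_logisticLoss b) a
  linarith

section InnerIntegrals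

variable {Ω E : Type*} [MeasurableSpace Ω] {P : Measure Ω} [IsFiniteMeasure P]
  [NormedAddCommGroup E] [InnerProductSpace ℝ E] {X : Ω → E}

theorem LipschitzWith.integrable_comp {F G : Type*} [NormedAddCommGroup F] [NormedAddCommGroup G]
    {f : F → G} {K : NNReal} (hf : LipschitzWith K f) {g : Ω → F} (hg : Integrable g P) :
    Integrable (fun ω => f (g ω)) P := by
  refine ((hg.norm.const_mul K).add (integrable_const ‖f 0‖)).mono'
    (hf.continuous.comp_aestronglyMeasurable hg.1) (ae_of_all _ fun ω => ?_)
  have := hf.norm_sub_le (g ω) 0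
  rw [sub_zero] at this
  have := norm_le_insert' (f (g ω)) (f 0)
  simp only [Pi.add_apply]
  linarith

theorem LipschitzWith.integral_comp_inner {f : ℝ → ℝ} {K : NNReal} (hf : LipschitzWith K f)
    (hX : Integrable X P) :
    LipschitzWith (K * (∫ ω, ‖X ω‖ ∂P).toNNReal) fun x : E => ∫ ω, f ⟪x, X ω⟫ ∂P := by
  have hfX (x : E) := hf.integrable_comp (hX.const_inner x)
  refine LipschitzWith.of_dist_le_mul fun x y => ?_
  rw [Real.dist_eq, ← integral_sub (hfX x) (hfX y), NNReal.coe_mul,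
    Real.coe_toNNReal _ (integral_nonneg fun _ => norm_nonneg _), dist_eq_norm, mul_assoc,
    mul_comm (∫ ω, ‖X ω‖ ∂P), ← integral_const_mul, ← integral_const_mul]
  refine (abs_integral_le_integral_abs).trans (integral_mono ((hfX x).sub (hfX y)).abs
    ((hX.norm.const_mul _).const_mul _) fun ω => ?_)
  calc |f ⟪x, X ω⟫ - f ⟪y, X ω⟫| ≤ K * |⟪x, X ω⟫ - ⟪y, X ω⟫| := by
        simpa [Real.dist_eq] using hf.dist_le_mul ⟪x, X ω⟫ ⟪y, X ω⟫
    _ ≤ K * (‖x - y‖ * ‖X ω‖) := by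
        rw [← inner_sub_left]
        exact mul_le_mul_of_nonneg_left (abs_real_inner_le_norm _ _) K.2

theorem exists_pos_mul_norm_le_integral_negPart_inner [ProperSpace E] (hX : Integrable X P)
    {C : Set E} (hC : IsClosed C) (hsmul : ∀ x ∈ C, ∀ t : ℝ, 0 ≤ t → t • x ∈ C)
    (hloss : ∀ x ∈ C, x ≠ 0 → ¬ ∀ᵐ ω ∂P, 0 ≤ ⟪x, X ω⟫) :
    ∃ m > 0, ∀ x ∈ C, m * ‖x‖ ≤ ∫ ω, ⟪x, X ω⟫⁻ ∂P := by
  set ρ : E → ℝ := fun x => ∫ ω, ⟪x, X ω⟫⁻ ∂P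
  have hρ_pos : ∀ x ∈ C, x ≠ 0 → 0 < ρ x := by
    intro x hx hx0
    have hneg := hloss x hx hx0
    rw [ae_iff] at hneg
    rw [integral_pos_iff_support_of_nonneg (fun ω => negPart_nonneg _)
      (lipschitzWith_negPart.integrable_comp (hX.const_inner x))]
    simpa [Function.support, pos_iff_ne_zero] using hneg
  have hρ_smul : ∀ x : E, ∀ t : ℝ, 0 ≤ t → ρ (t • x) = t * ρ x := by
    intro x t ht
    simp only [ρ, ← integral_const_mul, real_inner_smul_left, negPart_def,
      mul_max_of_nonneg _ _ ht, mul_neg, mul_zero]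
  obtain ⟨m, hm, hm_le⟩ : ∃ m > 0, ∀ ξ ∈ C ∩ Metric.sphere 0 1, m ≤ ρ ξ := by
    rcases (C ∩ Metric.sphere (0 : E) 1).eq_empty_or_nonempty with h | h
    · exact ⟨1, one_pos, by simp [h]⟩
    obtain ⟨ξ, hξ, hmin⟩ := ((isCompact_sphere 0 1).inter_left hC).exists_isMinOn h
      (lipschitzWith_negPart.integral_comp_inner hX).continuous.continuousOn
    exact ⟨ρ ξ, hρ_pos ξ hξ.1 (ne_zero_of_mem_unit_sphere ⟨ξ, hξ.2⟩), hmin⟩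
  refine ⟨m, hm, fun x hx => ?_⟩
  rcases eq_or_ne x 0 with rfl | hx0
  · simp
  have hξ : ‖x‖⁻¹ • x ∈ C ∩ Metric.sphere 0 1 :=
    ⟨hsmul x hx _ (by positivity), by simp [norm_smul, hx0]⟩
  calc m * ‖x‖ ≤ ρ (‖x‖⁻¹ • x) * ‖x‖ := by gcongr; exact hm_le _ hξ
    _ = ρ x := by rw [hρ_smul x _ (by positivity)]; field_simp

def logisticRisk (P : Measure Ω) (X : Ω → E) (x : E) : ℝ := ∫ ω, logisticLoss ⟪x, X ω⟫ ∂P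

theorem exists_isMinOn_logisticRisk [ProperSpace E] (hX : Integrable X P) {C : Set E}
    (hC : IsClosed C) (hC₀ : (0 : E) ∈ C) (hsmul : ∀ x ∈ C, ∀ t : ℝ, 0 ≤ t → t • x ∈ C)
    (hloss : ∀ x ∈ C, x ≠ 0 → ¬ ∀ᵐ ω ∂P, 0 ≤ ⟪x, X ω⟫) :
    ∃ H ∈ C, IsMinOn (logisticRisk P X) C H := by
  obtain ⟨m, hm, hcoercive⟩ := exists_pos_mul_norm_le_integral_negPart_inner hX hC hsmul hloss
  refine (lipschitzWith_logisticLoss.integral_comp_inner hX).continuous.continuousOn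
    |>.exists_isMinOn' hC hC₀ ?_
  have hfar : ∀ᶠ x in cocompact E, logisticRisk P X 0 / m ≤ ‖x‖ :=
    tendsto_norm_cocompact_atTop.eventually_ge_atTop _
  filter_upwards [hfar.filter_mono inf_le_left, mem_inf_of_right (mem_principal_self C)]
    with x hx hxC
  calc logisticRisk P X 0 ≤ m * ‖x‖ := by rwa [div_le_iff₀' hm] at hx
    _ ≤ ∫ ω, ⟪x, X ω⟫⁻ ∂P := hcoercive x hxC
    _ ≤ logisticRisk P X x :=
        integral_mono (lipschitzWith_negPart.integrable_comp (hX.const_inner x))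
          (lipschitzWith_logisticLoss.integrable_comp (hX.const_inner x))
          fun ω => negPart_le_logisticLoss _

theorem integral_sigmoid_mul_inner_nonpos (hX : Integrable X P) {H x : E}
    (hmin : ∀ t : ℝ, 0 < t → logisticRisk P X H ≤ logisticRisk P X (H + t • x)) :
    ∫ ω, sigmoid (-⟪H, X ω⟫) * ⟪x, X ω⟫ ∂P ≤ 0 := by
  set F : ℝ → ℝ := fun t => ∫ ω, sigmoid (-⟪H + t • x, X ω⟫) * ⟪x, X ω⟫ ∂P
  have hbdd (t : ℝ) (ω : Ω) : ‖sigmoid (-⟪H + t • x, X ω⟫)‖ ≤ 1 := by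
    rw [Real.norm_of_nonneg (sigmoid_nonneg _)]; exact sigmoid_le_one _
  have hmeas (t : ℝ) : AEStronglyMeasurable (fun ω => sigmoid (-⟪H + t • x, X ω⟫)) P :=
    continuous_sigmoid.comp_aestronglyMeasurable (hX.const_inner _).1.neg
  have hF_cont : Continuous F := by
    refine continuous_of_dominated (bound := fun ω => ‖⟪x, X ω⟫‖)
      (fun t => (hmeas t).mul (hX.const_inner x).1) (fun t => ae_of_all _ fun ω => ?_)
      (hX.const_inner x).norm (ae_of_all _ fun ω => by fun_prop)
    rw [norm_mul]
    exact mul_le_of_le_one_left (norm_nonneg _) (hbdd t ω)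
  -- Convexity bounds the increase of the risk from above only through the slope of the loss at
  -- the right endpoint `⟪H + t • x, X⟫`.
  have hF_nonpos : ∀ t > 0, F t ≤ 0 := by
    intro t ht
    have hdiff : logisticRisk P X (H + t • x) - logisticRisk P X H ≤ -(t * F t) := by
      have hint (y : E) := lipschitzWith_logisticLoss.integrable_comp (hX.const_inner y)
      rw [logisticRisk, logisticRisk, ← integral_sub (hint _) (hint _), ← integral_const_mul,
        ← integral_neg]
      refine integral_mono ((hint _).sub (hint _))
        (((hX.const_inner x).bdd_mul (hmeas t) (ae_of_all _ (hbdd t))).const_mul t).neg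
        fun ω => ?_
      have := logisticLoss_sub_le ⟪H, X ω⟫ ⟪H + t • x, X ω⟫
      simp only [inner_add_left, real_inner_smul_left] at this ⊢
      linarith
    nlinarith [hmin t ht]
  have hF_lim := (hF_cont.tendsto 0).mono_left (nhdsWithin_le_nhds (s := Ioi 0))
  simpa [F] using le_of_tendsto hF_lim (eventually_nhdsWithin_of_forall hF_nonpos)

end InnerIntegrals

section Tilted

variable {Ω : Type*} [MeasurableSpace Ω] {P : Measure Ω} {f : Ω → ℝ} {c : ℝ}

theorem integrable_exp_of_le [IsFiniteMeasure P] (hf : AEStronglyMeasurable f P)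
    (hfc : ∀ ω, f ω ≤ c) : Integrable (fun ω => exp (f ω)) P :=
  (integrable_const (exp c)).mono' (continuous_exp.comp_aestronglyMeasurable hf)
    (ae_of_all _ fun ω => by simpa using hfc ω)

theorem rnDeriv_tilted_le_of_le [SigmaFinite P] (hf : AEMeasurable f P) (hfc : ∀ ω, f ω ≤ c) :
    ∀ᵐ ω ∂P, (P.tilted f).rnDeriv P ω ≤ ENNReal.ofReal (exp c / ∫ ω, exp (f ω) ∂P) := by
  filter_upwards [rnDeriv_tilted_left_self hf] with ω hω
  rw [hω]
  exact ENNReal.ofReal_le_ofReal <| div_le_div_of_nonneg_right (exp_le_exp.2 (hfc ω))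
    (integral_nonneg fun _ => (exp_pos _).le)

theorem Integrable.tilted_of_le [IsFiniteMeasure P] {F : Type*} [NormedAddCommGroup F]
    [NormedSpace ℝ F] {g : Ω → F} (hg : Integrable g P) (hf : AEStronglyMeasurable f P)
    (hfc : ∀ ω, f ω ≤ c) : Integrable g (P.tilted f) :=
  (integrable_tilted_iff (integrable_exp_of_le hf hfc) g).2 <|
    hg.bdd_smul (exp c) (continuous_exp.comp_aestronglyMeasurable hf)
      (ae_of_all _ fun ω => by simpa using hfc ω)

theorem integral_tilted_nonpos {g : Ω → ℝ} (h : ∫ ω, exp (f ω) * g ω ∂P ≤ 0) :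
    ∫ ω, g ω ∂(P.tilted f) ≤ 0 := by
  simp_rw [integral_tilted, smul_eq_mul, div_mul_eq_mul_div]
  rw [integral_div]
  exact div_nonpos_of_nonpos_of_nonneg h (integral_nonneg fun _ => (exp_pos _).le)

end Tilted

theorem Convex.add_mem_of_smul_mem {E : Type*} [AddCommGroup E] [Module ℝ E] {C : Set E}
    (hC : Convex ℝ C) (hsmul : ∀ x ∈ C, ∀ t : ℝ, 0 ≤ t → t • x ∈ C) {x y : E} (hx : x ∈ C)
    (hy : y ∈ C) : x + y ∈ C := by
  have hmid := hC hx hy (by norm_num : (0 : ℝ) ≤ 1 / 2) (by norm_num : (0 : ℝ) ≤ 1 / 2)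
    (by norm_num)
  convert hsmul _ hmid 2 zero_le_two using 1
  rw [smul_add, smul_smul, smul_smul]
  norm_num

section Support

variable {Ω : Type*} [MeasurableSpace Ω] {d : ℕ} {P : Measure Ω}
  {ΔS : Ω → EuclideanSpace ℝ (Fin d)}

theorem lawSupport_eq_support_map (hΔS : Measurable ΔS) :
    lawSupport P ΔS = (P.map ΔS).support := by
  rw [lawSupport, Measure.support_eq_sInter]
  congr! 3 with A
  refine and_congr_right fun hA => ?_
  rw [Measure.map_apply hΔS hA.isOpen_compl.measurableSet, ae_iff]
  rfl

theorem ae_mem_lawSupport (hΔS : Measurable ΔS) : ∀ᵐ ω ∂P, ΔS ω ∈ lawSupport P ΔS := by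
  rw [lawSupport_eq_support_map hΔS]
  exact ae_of_ae_map hΔS.aemeasurable Measure.support_mem_ae

theorem inner_starProjection_Nperp_ae_eq (hΔS : Measurable ΔS) (h : EuclideanSpace ℝ (Fin d)) :
    ∀ᵐ ω ∂P, ⟪(Nperp P ΔS).starProjection h, ΔS ω⟫ = ⟪h, ΔS ω⟫ := by
  filter_upwards [ae_mem_lawSupport hΔS] with ω hω
  have := Submodule.starProjection_inner_eq_zero (K := Nperp P ΔS) h _ (Submodule.subset_span hω)
  rw [inner_sub_left] at this
  linarith

theorem eq_zero_of_mem_Nperp {x : EuclideanSpace ℝ (Fin d)} (hx : x ∈ Nperp P ΔS)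
    (h0 : ∀ᵐ ω ∂P, ⟪x, ΔS ω⟫ = 0) : x = 0 := by
  have hsupp : lawSupport P ΔS ⊆ {y | ⟪x, y⟫ = 0} :=
    sInter_subset_of_mem ⟨isClosed_eq (continuous_const.inner continuous_id) continuous_const, h0⟩
  have hker : Nperp P ΔS ≤ LinearMap.ker (innerₗ _ x) := Submodule.span_le.2 hsupp
  exact inner_self_eq_zero.1 (hker hx)

end Support

section ProjCone

variable {Ω : Type*} [MeasurableSpace Ω] {d : ℕ} {P : Measure Ω}
  {ΔS : Ω → EuclideanSpace ℝ (Fin d)} {𝓗 : Set (EuclideanSpace ℝ (Fin d))}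

theorem smul_mem_projCone {x : EuclideanSpace ℝ (Fin d)} (hx : x ∈ projCone P ΔS 𝓗) {t : ℝ}
    (ht : 0 ≤ t) : t • x ∈ projCone P ΔS 𝓗 := by
  obtain ⟨c, hc, h, hh, rfl⟩ := hx
  exact ⟨t * c, mul_nonneg ht hc, h, hh, smul_smul t c _⟩

theorem starProjection_mem_projCone {h : EuclideanSpace ℝ (Fin d)} (hh : h ∈ 𝓗) :
    (Nperp P ΔS).starProjection h ∈ projCone P ΔS 𝓗 :=
  ⟨1, zero_le_one, h, hh, (one_smul _ _).symm⟩

theorem zero_mem_projCone (h𝓗 : 𝓗.Nonempty) : 0 ∈ projCone P ΔS 𝓗 := by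
  obtain ⟨h, hh⟩ := h𝓗
  simpa using smul_mem_projCone (starProjection_mem_projCone (P := P) (ΔS := ΔS) hh) le_rfl

theorem projCone_subset_Nperp : projCone P ΔS 𝓗 ⊆ Nperp P ΔS := by
  rintro _ ⟨c, -, h, -, rfl⟩
  exact Submodule.smul_mem _ _ (Submodule.coe_mem _)

theorem not_ae_nonneg_inner_of_mem_projCone (hΔS : Measurable ΔS)
    (hNA : ∀ H ∈ 𝓗, (∀ᵐ ω ∂P, 0 ≤ ⟪H, ΔS ω⟫) → (∀ᵐ ω ∂P, ⟪H, ΔS ω⟫ = 0))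
    {x : EuclideanSpace ℝ (Fin d)} (hx : x ∈ projCone P ΔS 𝓗) (hx0 : x ≠ 0) :
    ¬ ∀ᵐ ω ∂P, 0 ≤ ⟪x, ΔS ω⟫ := by
  intro hnonneg
  have hxN := projCone_subset_Nperp hx
  obtain ⟨c, hc, h, hh, rfl⟩ := hx
  have hc0 : 0 < c := hc.lt_of_ne (by rintro rfl; simp at hx0)
  have hproj := inner_starProjection_Nperp_ae_eq (P := P) hΔS h
  have hzero := hNA h hh <| by
    filter_upwards [hnonneg, hproj] with ω h1 h2
    rw [real_inner_smul_left, Submodule.coe_orthogonalProjectionOnto_apply, h2] at h1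
    exact nonneg_of_mul_nonneg_right h1 hc0
  refine hx0 (eq_zero_of_mem_Nperp hxN ?_)
  filter_upwards [hzero, hproj] with ω h1 h2
  rw [real_inner_smul_left, Submodule.coe_orthogonalProjectionOnto_apply, h2, h1, mul_zero]

end ProjCone

theorem stmt1_general {Ω : Type*} [MeasurableSpace Ω]
    {d : ℕ} (P : Measure Ω) [IsProbabilityMeasure P]
    (ΔS : Ω → EuclideanSpace ℝ (Fin d)) (hmeas : Measurable ΔS)
    (hint : Integrable (fun ω => ‖ΔS ω‖) P)
    (𝓗 : Set (EuclideanSpace ℝ (Fin d)))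
    (hCclosed : IsClosed (projCone P ΔS 𝓗)) (hCconvex : Convex ℝ (projCone P ΔS 𝓗))
    (hNA : ∀ H ∈ 𝓗, (∀ᵐ ω ∂P, 0 ≤ ⟪H, ΔS ω⟫) → (∀ᵐ ω ∂P, ⟪H, ΔS ω⟫ = 0)) :
    ∃ Q : Measure Ω, IsProbabilityMeasure Q ∧ Q ≪ P ∧ P ≪ Q ∧
      (∃ c : ℝ≥0∞, c ≠ ⊤ ∧ ∀ᵐ ω ∂P, Q.rnDeriv P ω ≤ c) ∧
      Integrable (fun ω => ‖ΔS ω‖) Q ∧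
      ∀ H ∈ 𝓗, ∫ ω, ⟪H, ΔS ω⟫ ∂Q ≤ 0 := by
  rcases 𝓗.eq_empty_or_nonempty with rfl | h𝓗
  · exact ⟨P, inferInstance, .rfl, .rfl,
      ⟨1, ENNReal.one_ne_top, (Measure.rnDeriv_self P).mono fun _ h => h.le⟩, hint, by simp⟩
  have hX : Integrable ΔS P := (integrable_norm_iff hmeas.aestronglyMeasurable).1 hint
  have hsmul := fun x (hx : x ∈ projCone P ΔS 𝓗) (t : ℝ) (ht : 0 ≤ t) => smul_mem_projCone hx ht
  obtain ⟨H, hHC, hHmin⟩ := exists_isMinOn_logisticRisk hX hCclosed (zero_mem_projCone h𝓗)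
    hsmul fun x hx hx0 => not_ae_nonneg_inner_of_mem_projCone hmeas hNA hx hx0
  set f : Ω → ℝ := fun ω => log (sigmoid (-⟪H, ΔS ω⟫))
  have hf_meas : AEStronglyMeasurable f P :=
    (measurable_log.comp (continuous_sigmoid.measurable.comp
      (measurable_const.inner hmeas).neg)).aestronglyMeasurable
  have hf_le (ω : Ω) : f ω ≤ 0 := log_nonpos (sigmoid_nonneg _) (sigmoid_le_one _)
  have hexp_f (ω : Ω) : exp (f ω) = sigmoid (-⟪H, ΔS ω⟫) := exp_log (sigmoid_pos _)
  have hexp_int := integrable_exp_of_le hf_meas hf_le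
  refine ⟨P.tilted f, isProbabilityMeasure_tilted hexp_int, tilted_absolutelyContinuous P f,
    absolutelyContinuous_tilted hexp_int,
    ⟨_, ENNReal.ofReal_ne_top, rnDeriv_tilted_le_of_le hf_meas.aemeasurable hf_le⟩,
    Integrable.tilted_of_le hint hf_meas hf_le, fun h hh => integral_tilted_nonpos ?_⟩
  have hfoc := integral_sigmoid_mul_inner_nonpos hX (x := (Nperp P ΔS).starProjection h)
    fun t ht => hHmin (hCconvex.add_mem_of_smul_mem hsmul hHC
      (hsmul _ (starProjection_mem_projCone hh) t ht.le))
  refine le_of_eq_of_le (integral_congr_ae ?_) hfoc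
  filter_upwards [inner_starProjection_Nperp_ae_eq hmeas h] with ω hω
  rw [hexp_f, hω]

/-- one-period constrained FTAP under a single measure: NA(P) implies the
existence of an equivalent measure `Q` with bounded density, `E_Q|ΔS| < ∞` and
`E_Q[H·ΔS] ≤ 0` for every admissible `H`. -/
theorem stmt1 {Ω : Type*} [TopologicalSpace Ω] [PolishSpace Ω] [MeasurableSpace Ω] [BorelSpace Ω]
    {d : ℕ} (P : Measure Ω) [IsProbabilityMeasure P]
    (ΔS : Ω → EuclideanSpace ℝ (Fin d)) (hmeas : Measurable ΔS)
    (hint : Integrable (fun ω => ‖ΔS ω‖) P)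
    (𝓗 : Set (EuclideanSpace ℝ (Fin d)))
    (hCclosed : IsClosed (projCone P ΔS 𝓗)) (hCconvex : Convex ℝ (projCone P ΔS 𝓗))
    (hNA : ∀ H ∈ 𝓗, (∀ᵐ ω ∂P, 0 ≤ ⟪H, ΔS ω⟫) → (∀ᵐ ω ∂P, ⟪H, ΔS ω⟫ = 0)) :
    ∃ Q : Measure Ω, IsProbabilityMeasure Q ∧ Q ≪ P ∧ P ≪ Q ∧
      (∃ c : ℝ≥0∞, c ≠ ⊤ ∧ ∀ᵐ ω ∂P, Q.rnDeriv P ω ≤ c) ∧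
      Integrable (fun ω => ‖ΔS ω‖) Q ∧
      ∀ H ∈ 𝓗, ∫ ω, ⟪H, ΔS ω⟫ ∂Q ≤ 0 :=
  stmt1_general P ΔS hmeas hint 𝓗 hCclosed hCconvex hNA
end
end

section
/- Consider Ω = [1,2] with a one-period market: S₀ = (1,1), S₁(s) = (s,0), and P the uniform distribution on [1,2], so ΔS(s) = (s−1,−1). Let H := {(h₁,h₂) ∈ ℝ² : h₁² + (h₂−1)² ≤ 1} be the admissible strategies. Then: (a) NA(P) holds, i.e., for all H ∈ H, H·ΔS ≥ 0 P-a.s. implies H·ΔS = 0 P-a.s.; (b) there exists NO probability measure Q equivalent to P with E_Q[H·ΔS] ≤ 0 for all H ∈ H; (c) the generated cone {cH : c ≥ 0, H ∈ H} = {(h₁,h₂) : h₂ > 0} ∪ {(0,0)} is not closed. -/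
/-!
The gain `h₁ (s - 1) - h₂` of a strategy in the disc equals `-h₂ ≤ 0` at `s = 1`, so by continuity
an almost surely nonnegative gain forces `h₂ = 0`, and the only point of the disc on the `h₁`-axis
is the origin. The disc is tangent to that axis at the origin, so its rays fill the open upper
half-plane; this cone is not closed, since it misses `(1, 0)`, a limit of `(1, t)`, `t ↓ 0`.
Under any `Q ≪ P` the expected return `I = E_Q[s - 1]` is positive, and `(1, I / 2)`, a positive
multiple of an admissible strategy, has expected gain `I / 2 > 0`.
-/

open MeasureTheory Filter Set
open scoped ENNReal

noncomputable section

/-- The uniform distribution on `[1,2]`. -/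
def Punif : Measure ℝ := volume.restrict (Set.Icc (1 : ℝ) 2)

/-- The price increment of the two stocks: `ΔS(s) = (s - 1, -1)`. -/
def ΔS2 (s : ℝ) : ℝ × ℝ := (s - 1, -1)

/-- The constrained strategies: the closed disc of radius 1 centered at `(0,1)`. -/
def 𝓗2 : Set (ℝ × ℝ) := {h | h.1 ^ 2 + (h.2 - 1) ^ 2 ≤ 1}

/-- The gain of strategy `h` in scenario `s`. -/
def gain2 (h : ℝ × ℝ) (s : ℝ) : ℝ := h.1 * (s - 1) - h.2

theorem le_on_Icc_of_ae_le {X Y : Type*} [TopologicalSpace X] [LinearOrder X]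
    [OrderTopology X] [DenselyOrdered X] {m : MeasurableSpace X} {μ : Measure X}
    [μ.IsOpenPosMeasure] [TopologicalSpace Y] [LinearOrder Y] [OrderClosedTopology Y]
    {a b : X} (hab : a ≠ b) {f g : X → Y} (hf : ContinuousOn f (Icc a b))
    (hg : ContinuousOn g (Icc a b)) (hfg : f ≤ᵐ[μ.restrict (Icc a b)] g) :
    ∀ x ∈ Icc a b, f x ≤ g x := by
  have hmin : (fun x => min (f x) (g x)) =ᵐ[μ.restrict (Icc a b)] f :=
    hfg.mono fun _ h => min_eq_left h
  intro x hx
  rw [← Measure.eqOn_Icc_of_ae_eq μ hab hmin (hf.inf hg) hf hx]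
  exact min_le_right _ _

lemma snd_nonneg_of_mem_𝓗2 {h : ℝ × ℝ} (hh : h ∈ 𝓗2) : 0 ≤ h.2 := by
  have : h.1 ^ 2 + (h.2 - 1) ^ 2 ≤ 1 := hh
  nlinarith [sq_nonneg h.1]

lemma eq_zero_of_mem_𝓗2_of_snd_nonpos {h : ℝ × ℝ} (hh : h ∈ 𝓗2) (hle : h.2 ≤ 0) : h = 0 := by
  have : h.1 ^ 2 + (h.2 - 1) ^ 2 ≤ 1 := hh
  have h2 : h.2 = 0 := le_antisymm hle (snd_nonneg_of_mem_𝓗2 hh)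
  rw [h2] at this
  exact Prod.ext (pow_eq_zero_iff two_ne_zero |>.1 (by nlinarith [sq_nonneg h.1])) h2

-- the ray through `p` meets the circle `x² + y² = 2y` bounding `𝓗2` at this point
lemma smul_mem_𝓗2 {p : ℝ × ℝ} (hp : 0 < p.2) :
    (2 * p.2 / (p.1 ^ 2 + p.2 ^ 2)) • p ∈ 𝓗2 := by
  have hn : 0 < p.1 ^ 2 + p.2 ^ 2 := by positivity
  refine le_of_eq (?_ : _ = (1 : ℝ))
  simp only [Prod.smul_fst, Prod.smul_snd, smul_eq_mul]
  field_simp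
  ring

lemma cone_𝓗2 : {x : ℝ × ℝ | ∃ c : ℝ, 0 ≤ c ∧ ∃ h ∈ 𝓗2, x = c • h}
    = {p : ℝ × ℝ | 0 < p.2} ∪ {(0, 0)} := by
  ext x
  constructor
  · rintro ⟨c, hc, h, hh, rfl⟩
    rcases hc.eq_or_lt with rfl | hc
    · simp [Prod.zero_eq_mk]
    rcases (snd_nonneg_of_mem_𝓗2 hh).eq_or_lt with h2 | h2
    · simp [eq_zero_of_mem_𝓗2_of_snd_nonpos hh h2.ge, Prod.zero_eq_mk]
    · exact Or.inl (mul_pos hc h2)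
  · rintro (hx | hx)
    · have hx : 0 < x.2 := hx
      have hk : 0 < 2 * x.2 / (x.1 ^ 2 + x.2 ^ 2) := by positivity
      exact ⟨_, (inv_pos.2 hk).le, _, smul_mem_𝓗2 hx, (inv_smul_smul₀ hk.ne' x).symm⟩
    · exact ⟨0, le_rfl, (0, 1), by simp [𝓗2], by rw [zero_smul]; exact hx⟩

lemma not_isClosed_snd_pos_union_zero : ¬ IsClosed ({p : ℝ × ℝ | 0 < p.2} ∪ {(0, 0)}) := by
  intro hcl
  have h10 : ((1 : ℝ), (0 : ℝ)) ∈ closure (univ ×ˢ Ioi (0 : ℝ)) := by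
    rw [closure_prod_eq, closure_Ioi]
    simp
  have := hcl.closure_subset_iff.2 (fun p hp => Or.inl hp.2) h10
  simp at this

lemma gain2_smul (c : ℝ) (h : ℝ × ℝ) (s : ℝ) : gain2 (c • h) s = c * gain2 h s := by
  simp only [gain2, Prod.smul_fst, Prod.smul_snd, smul_eq_mul]
  ring

lemma integral_gain2 {Q : Measure ℝ} [IsProbabilityMeasure Q] (hint : Integrable (fun s => s) Q)
    (h : ℝ × ℝ) : ∫ s, gain2 h s ∂Q = h.1 * ∫ s, (s - 1) ∂Q - h.2 := by
  have hint1 : Integrable (fun s : ℝ => s - 1) Q := hint.sub (integrable_const 1)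
  simp only [gain2]
  rw [integral_sub (hint1.const_mul _) (integrable_const _),
    integral_const_mul, integral_const, probReal_univ, one_smul]

lemma ae_one_lt_Punif : ∀ᵐ s ∂Punif, 1 < s := by
  rw [Punif, Measure.restrict_congr_set Ioc_ae_eq_Icc.symm]
  exact (ae_restrict_mem measurableSet_Ioc).mono fun _ hs => hs.1

lemma integral_sub_one_pos {Q : Measure ℝ} [IsProbabilityMeasure Q] (hQ : Q ≪ Punif)
    (hint : Integrable (fun s => s) Q) : 0 < ∫ s, (s - 1) ∂Q := by
  have hpos : ∀ᵐ s ∂Q, 0 < s - 1 := hQ.ae_le (ae_one_lt_Punif.mono fun _ hs => sub_pos.2 hs)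
  rw [integral_pos_iff_support_of_nonneg_ae (hpos.mono fun _ hs => hs.le)
    (hint.sub (integrable_const 1)), pos_iff_ne_zero, Ne, Measure.measure_support_eq_zero_iff Q]
  intro hzero
  obtain ⟨s, hs, hs0⟩ := (hpos.and hzero).exists
  simp only [Pi.zero_apply] at hs0
  linarith

lemma ae_gain2_eq_zero_of_ae_nonneg {h : ℝ × ℝ} (hh : h ∈ 𝓗2)
    (hnn : ∀ᵐ s ∂Punif, 0 ≤ gain2 h s) : ∀ᵐ s ∂Punif, gain2 h s = 0 := by
  have hcont : Continuous (gain2 h) := by unfold gain2; fun_prop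
  have h1 : 0 ≤ gain2 h 1 :=
    le_on_Icc_of_ae_le one_lt_two.ne continuousOn_const hcont.continuousOn hnn 1
      ⟨le_rfl, one_le_two⟩
  obtain rfl : h = 0 := eq_zero_of_mem_𝓗2_of_snd_nonpos hh (by simpa [gain2] using h1)
  exact ae_of_all _ fun s => by simp [gain2]

lemma not_exists_equivalent_supermartingale_measure :
    ¬ ∃ Q : Measure ℝ, IsProbabilityMeasure Q ∧ Q ≪ Punif ∧ Punif ≪ Q ∧
      Integrable (fun s => s) Q ∧ ∀ h ∈ 𝓗2, ∫ s, gain2 h s ∂Q ≤ 0 := by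
  rintro ⟨Q, hQ, hQP, -, hint, hsup⟩
  set I := ∫ s, (s - 1) ∂Q
  have hI : 0 < I := integral_sub_one_pos hQP hint
  obtain ⟨c, hc, h, hh, hp⟩ : ((1 : ℝ), I / 2) ∈
      {x : ℝ × ℝ | ∃ c : ℝ, 0 ≤ c ∧ ∃ h ∈ 𝓗2, x = c • h} := by
    rw [cone_𝓗2]
    exact Or.inl (half_pos hI)
  have hgain : ∫ s, gain2 (1, I / 2) s ∂Q = c * ∫ s, gain2 h s ∂Q := by
    simp only [hp, gain2_smul]
    exact integral_const_mul c _
  rw [integral_gain2 hint] at hgain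
  nlinarith [mul_nonpos_of_nonneg_of_nonpos hc (hsup h hh)]

/-- counterexample to the constrained FTAP with a non-closed generated cone:
(a) NA(P) holds; (b) no equivalent measure `Q` with `E_Q[H·ΔS] ≤ 0` for all `H ∈ 𝓗`;
(c) the generated cone equals `{h₂ > 0} ∪ {0}` and is not closed. -/
theorem stmt2 :
    -- (a) NA(P)
    (∀ h ∈ 𝓗2, (∀ᵐ s ∂Punif, 0 ≤ gain2 h s) → (∀ᵐ s ∂Punif, gain2 h s = 0)) ∧
    -- (b) no equivalent supermartingale-type measure
    (¬ ∃ Q : Measure ℝ, IsProbabilityMeasure Q ∧ Q ≪ Punif ∧ Punif ≪ Q ∧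
      Integrable (fun s => s) Q ∧ ∀ h ∈ 𝓗2, ∫ s, gain2 h s ∂Q ≤ 0) ∧
    -- (c) the generated cone and its non-closedness
    ({x : ℝ × ℝ | ∃ c : ℝ, 0 ≤ c ∧ ∃ h ∈ 𝓗2, x = c • h}
        = {p : ℝ × ℝ | 0 < p.2} ∪ {(0, 0)}) ∧
    ¬ IsClosed {x : ℝ × ℝ | ∃ c : ℝ, 0 ≤ c ∧ ∃ h ∈ 𝓗2, x = c • h} := by
  refine ⟨fun h hh => ae_gain2_eq_zero_of_ae_nonneg hh,
    not_exists_equivalent_supermartingale_measure, cone_𝓗2, ?_⟩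
  rw [cone_𝓗2]
  exact not_isClosed_snd_pos_union_zero
end
end

section
/- Let P be a convex set of probability measures on a Polish space Ω, ΔS : Ω → ℝ^d Borel, and C ⊆ ℝ^d a closed cone contained in N⊥(P) := span(supp_P(ΔS)). Assume NA(P): for every H ∈ C, if H·ΔS ≥ 0 P-q.s. (i.e., P-a.s. for all P ∈ P) then H·ΔS = 0 P-q.s. Then there exists a single measure P' ∈ P such that for every H ∈ C with ‖H‖ = 1, P'(H·ΔS < 0) > 0. -/
open MeasureTheory Filter Set
open scoped RealInnerProductSpace ENNReal

noncomputable section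

/-- Quasi-sure support of `ΔS` under a family `Pfam` of measures: the smallest closed set
containing `ΔS` `Pfam`-q.s. -/
def qsSupport {Ω : Type*} [MeasurableSpace Ω] {d : ℕ} (Pfam : Set (Measure Ω))
    (ΔS : Ω → EuclideanSpace ℝ (Fin d)) : Set (EuclideanSpace ℝ (Fin d)) :=
  ⋂₀ {A | IsClosed A ∧ ∀ P ∈ Pfam, ∀ᵐ ω ∂P, ΔS ω ∈ A}

/-! By no-arbitrage, every unit vector `H ∈ C` has a witness `P_H ∈ Pfam` with
`P_H(H·ΔS < 0) > 0`, for otherwise `H·ΔS = 0` q.s. and `H` would be orthogonal to the span of the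
quasi-sure support, which contains it. Positivity of `P_H(H'·ΔS < 0)` persists for `H'` near `H`,
so finitely many witnesses cover the compact set of unit vectors of `C`, and an iterated
mixture of them, which lies in `Pfam` by convexity, dominates each of them. -/

open scoped Topology

section QuasiSureSupport

variable {Ω : Type*} [MeasurableSpace Ω] {d : ℕ} {Pfam : Set (Measure Ω)}
  {ΔS : Ω → EuclideanSpace ℝ (Fin d)}

lemma qsSupport_subset {A : Set (EuclideanSpace ℝ (Fin d))} (hA : IsClosed A)
    (hae : ∀ P ∈ Pfam, ∀ᵐ ω ∂P, ΔS ω ∈ A) : qsSupport Pfam ΔS ⊆ A :=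
  sInter_subset_of_mem ⟨hA, hae⟩

lemma eq_zero_of_mem_span_qsSupport_of_ae_inner_eq_zero {H : EuclideanSpace ℝ (Fin d)}
    (hH : H ∈ Submodule.span ℝ (qsSupport Pfam ΔS))
    (hae : ∀ P ∈ Pfam, ∀ᵐ ω ∂P, ⟪H, ΔS ω⟫ = 0) : H = 0 := by
  have hsupp : qsSupport Pfam ΔS ⊆ ((ℝ ∙ H)ᗮ : Submodule ℝ _) :=
    qsSupport_subset (Submodule.closed_of_finiteDimensional _) fun P hP =>
      (hae P hP).mono fun ω hω => Submodule.mem_orthogonal_singleton_iff_inner_right.2 hω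
  have hHH : ⟪H, H⟫ = 0 :=
    Submodule.mem_orthogonal_singleton_iff_inner_right.1 (Submodule.span_le.2 hsupp hH)
  exact inner_self_eq_zero.1 hHH

lemma exists_measure_inner_neg_pos_of_mem_span_qsSupport {H : EuclideanSpace ℝ (Fin d)}
    (hH : H ∈ Submodule.span ℝ (qsSupport Pfam ΔS)) (hH0 : H ≠ 0)
    (hNA : (∀ P ∈ Pfam, ∀ᵐ ω ∂P, 0 ≤ ⟪H, ΔS ω⟫) → ∀ P ∈ Pfam, ∀ᵐ ω ∂P, ⟪H, ΔS ω⟫ = 0) :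
    ∃ P ∈ Pfam, 0 < P {ω | ⟪H, ΔS ω⟫ < 0} := by
  by_contra! hnull
  refine hH0 (eq_zero_of_mem_span_qsSupport_of_ae_inner_eq_zero hH (hNA fun P hP => ?_))
  simpa only [ae_iff, not_le] using nonpos_iff_eq_zero.1 (hnull P hP)

end QuasiSureSupport

lemma eventually_measure_inner_neg_pos {Ω E : Type*} [MeasurableSpace Ω]
    [SeminormedAddCommGroup E] [InnerProductSpace ℝ E] {P : Measure Ω} {X : Ω → E} {H : E}
    (hH : 0 < P {ω | ⟪H, X ω⟫ < 0}) : ∀ᶠ H' in 𝓝 H, 0 < P {ω | ⟪H', X ω⟫ < 0} := by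
  set T : ℕ → Set Ω := fun n => {ω | ⟪H, X ω⟫ + ‖X ω‖ / (n + 1) < 0}
  have hcover : {ω | ⟪H, X ω⟫ < 0} ⊆ ⋃ n, T n := by
    intro ω hω
    obtain ⟨n, hn⟩ := exists_nat_gt (‖X ω‖ / -⟪H, X ω⟫)
    refine mem_iUnion.2 ⟨n, ?_⟩
    have hneg : 0 < -⟪H, X ω⟫ := neg_pos.2 hω
    rw [div_lt_iff₀ hneg] at hn
    have : ‖X ω‖ / (n + 1) < -⟪H, X ω⟫ := by
      rw [div_lt_iff₀ (by positivity)]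
      nlinarith
    exact lt_neg_iff_add_neg'.1 this
  obtain ⟨n, hn⟩ : ∃ n, 0 < P (T n) := by
    by_contra! hnull
    have : P (⋃ n, T n) = 0 := measure_iUnion_null fun n => nonpos_iff_eq_zero.1 (hnull n)
    exact hH.ne' (measure_mono_null hcover this)
  filter_upwards [Metric.ball_mem_nhds H (by positivity : (0 : ℝ) < 1 / (n + 1))] with H' hH'
  refine hn.trans_le (measure_mono fun ω hω => ?_)
  have hdist : ‖H' - H‖ ≤ 1 / (n + 1) := (mem_ball_iff_norm.1 hH').le
  calc ⟪H', X ω⟫ = ⟪H, X ω⟫ + ⟪H' - H, X ω⟫ := by rw [← inner_add_left, add_sub_cancel]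
    _ ≤ ⟪H, X ω⟫ + ‖H' - H‖ * ‖X ω‖ := by gcongr; exact real_inner_le_norm _ _
    _ ≤ ⟪H, X ω⟫ + 1 / (n + 1) * ‖X ω‖ := by gcongr
    _ = ⟪H, X ω⟫ + ‖X ω‖ / (n + 1) := by ring
    _ < 0 := hω

lemma exists_mem_forall_absolutelyContinuous_of_convex {Ω : Type*} [MeasurableSpace Ω]
    {Pfam : Set (Measure Ω)}
    (hconvex : ∀ P ∈ Pfam, ∀ P' ∈ Pfam, ∀ a b : ℝ≥0∞, a + b = 1 → a • P + b • P' ∈ Pfam)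
    {s : Finset (Measure Ω)} (hs : s.Nonempty) (hsub : ↑s ⊆ Pfam) :
    ∃ Q ∈ Pfam, ∀ P ∈ s, P ≪ Q := by
  induction hs using Finset.Nonempty.cons_induction with
  | singleton P => exact ⟨P, hsub (by simp), by simp [Measure.AbsolutelyContinuous.rfl]⟩
  | cons P s hP hs ih =>
    simp only [Finset.coe_cons, insert_subset_iff] at hsub
    obtain ⟨Q, hQ, hsQ⟩ := ih hsub.2
    have htwo : (2⁻¹ : ℝ≥0∞) ≠ 0 := ENNReal.inv_ne_zero.2 ENNReal.ofNat_ne_top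
    refine ⟨2⁻¹ • P + 2⁻¹ • Q, hconvex P hsub.1 Q hQ _ _ ENNReal.inv_two_add_inv_two, ?_⟩
    simp only [Finset.mem_cons, forall_eq_or_imp]
    exact ⟨(Measure.absolutelyContinuous_smul htwo).add_right _,
      fun P' hP' => ((hsQ P' hP').smul_right htwo).add_right' _⟩

theorem stmt6_general {Ω : Type*} [MeasurableSpace Ω]
    {d : ℕ} (Pfam : Set (Measure Ω)) (hne : Pfam.Nonempty)
    (hconvex : ∀ P ∈ Pfam, ∀ P' ∈ Pfam, ∀ a b : ℝ≥0∞, a + b = 1 → a • P + b • P' ∈ Pfam)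
    (ΔS : Ω → EuclideanSpace ℝ (Fin d))
    (C : Set (EuclideanSpace ℝ (Fin d))) (hCclosed : IsClosed C)
    (hCsub : C ⊆ (Submodule.span ℝ (qsSupport Pfam ΔS) : Set (EuclideanSpace ℝ (Fin d))))
    (hNA : ∀ H ∈ C, (∀ P ∈ Pfam, ∀ᵐ ω ∂P, 0 ≤ ⟪H, ΔS ω⟫) →
      (∀ P ∈ Pfam, ∀ᵐ ω ∂P, ⟪H, ΔS ω⟫ = 0)) :
    ∃ P' ∈ Pfam, ∀ H ∈ C, ‖H‖ = 1 → 0 < P' {ω | ⟪H, ΔS ω⟫ < 0} := by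
  classical
  obtain ⟨P₀, hP₀⟩ := hne
  have hK : IsCompact (C ∩ Metric.sphere 0 1) := (isCompact_sphere 0 1).inter_left hCclosed
  have hwitness : ∀ H ∈ C ∩ Metric.sphere 0 1,
      ∃ P ∈ Pfam, ∀ᶠ H' in 𝓝 H, 0 < P {ω | ⟪H', ΔS ω⟫ < 0} := by
    rintro H ⟨hHC, hH⟩
    obtain ⟨P, hP, hpos⟩ := exists_measure_inner_neg_pos_of_mem_span_qsSupport (hCsub hHC)
      (ne_zero_of_mem_unit_sphere ⟨H, hH⟩) (hNA H hHC)
    exact ⟨P, hP, eventually_measure_inner_neg_pos hpos⟩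
  choose! P hP hPev using hwitness
  obtain ⟨t, htK, hcover⟩ := hK.elim_nhds_subcover _ hPev
  obtain ⟨Q, hQ, hac⟩ := exists_mem_forall_absolutelyContinuous_of_convex hconvex
    (Finset.insert_nonempty P₀ (t.image P)) (by
      rw [Finset.coe_insert, Finset.coe_image, insert_subset_iff, image_subset_iff]
      exact ⟨hP₀, fun x hx => hP x (htK x hx)⟩)
  refine ⟨Q, hQ, fun H hHC hH => ?_⟩
  obtain ⟨x, hxt, hx⟩ := mem_iUnion₂.1 (hcover ⟨hHC, mem_sphere_zero_iff_norm.2 hH⟩)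
  exact (hac (P x) (Finset.mem_insert_of_mem (Finset.mem_image_of_mem P hxt))).pos_mono hx

/-- finite covering step. Under NA(Pfam) for a closed cone `C` contained in
`N⊥(Pfam)`, there is a single `P' ∈ Pfam` witnessing `P'(H·ΔS < 0) > 0` for all unit `H ∈ C`. -/
theorem stmt6 {Ω : Type*} [TopologicalSpace Ω] [PolishSpace Ω] [MeasurableSpace Ω] [BorelSpace Ω]
    {d : ℕ} (Pfam : Set (Measure Ω)) (hne : Pfam.Nonempty)
    (hprob : ∀ P ∈ Pfam, IsProbabilityMeasure P)
    (hconvex : ∀ P ∈ Pfam, ∀ P' ∈ Pfam, ∀ a b : ℝ≥0∞, a + b = 1 → a • P + b • P' ∈ Pfam)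
    (ΔS : Ω → EuclideanSpace ℝ (Fin d)) (hmeas : Measurable ΔS)
    (C : Set (EuclideanSpace ℝ (Fin d))) (hCclosed : IsClosed C)
    (hCcone : ∀ (c : ℝ), 0 ≤ c → ∀ x ∈ C, c • x ∈ C)
    (hCsub : C ⊆ (Submodule.span ℝ (qsSupport Pfam ΔS) : Set (EuclideanSpace ℝ (Fin d))))
    (hNA : ∀ H ∈ C, (∀ P ∈ Pfam, ∀ᵐ ω ∂P, 0 ≤ ⟪H, ΔS ω⟫) →
      (∀ P ∈ Pfam, ∀ᵐ ω ∂P, ⟪H, ΔS ω⟫ = 0)) :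
    ∃ P' ∈ Pfam, ∀ H ∈ C, ‖H‖ = 1 → 0 < P' {ω | ⟪H, ΔS ω⟫ < 0} :=
  stmt6_general Pfam hne hconvex ΔS C hCclosed hCsub hNA
end
end

section
/- Let P be a convex set of probability measures on a Polish space, ΔS : Ω → ℝ^d Borel, and let P' ∈ P. If N⊥(P') := span(supp_{P'}(ΔS)) is a proper subspace of N⊥(P) := span(supp_P(ΔS)), then there exist R ∈ P with P' ≪ R and N⊥(R) strictly larger than N⊥(P'). Consequently, iterating, there exists P'' ∈ P with P' ≪ P'' and N⊥(P'') = N⊥(P). -/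
/-!
For a linear subspace `V` of `ℝ^d` one has `N⊥(Q) ≤ V` iff `ΔS ∈ V` holds `Q`-a.s.: subspaces are
closed, and since `ℝ^d` is second countable the support carries full mass. Hence if `N⊥(P')` is a
proper subspace of `N⊥(𝒫)`, some `R₁ ∈ 𝒫` charges `{ΔS ∉ N⊥(P')}`, and the midpoint of `P'` and
`R₁` dominates `P'` with a strictly larger `N⊥`. For the second claim, take a dominating measure
whose `N⊥` is maximal; it exists because the subspaces of `ℝ^d` satisfy the ascending chain
condition, and by the first claim its `N⊥` cannot be proper.
-/

open MeasureTheory Set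
open scoped RealInnerProductSpace ENNReal

noncomputable section

/-- `N⊥(Q)` for a single measure `Q`: the span of the support of the law of `ΔS` under `Q`. -/
def NperpOne {Ω : Type*} [MeasurableSpace Ω] {d : ℕ} (Q : Measure Ω)
    (ΔS : Ω → EuclideanSpace ℝ (Fin d)) : Submodule ℝ (EuclideanSpace ℝ (Fin d)) :=
  Submodule.span ℝ (qsSupport {Q} ΔS)

section QuasiSureSupport

variable {Ω : Type*} [MeasurableSpace Ω] {d : ℕ} {F G : Set (Measure Ω)} {P Q R : Measure Ω}
  {ΔS : Ω → EuclideanSpace ℝ (Fin d)}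

lemma qsSupport_subset_of_ae {A : Set (EuclideanSpace ℝ (Fin d))} (hA : IsClosed A)
    (h : ∀ P ∈ F, ∀ᵐ ω ∂P, ΔS ω ∈ A) : qsSupport F ΔS ⊆ A :=
  sInter_subset_of_mem ⟨hA, h⟩

lemma qsSupport_mono (h : F ⊆ G) : qsSupport F ΔS ⊆ qsSupport G ΔS :=
  sInter_subset_sInter fun _ hA => ⟨hA.1, fun P hP => hA.2 P (h hP)⟩

-- By second countability (Lindelöf), the complement of the support is a countable union of
-- null open sets.
lemma ae_mem_qsSupport (hP : P ∈ F) : ∀ᵐ ω ∂P, ΔS ω ∈ qsSupport F ΔS := by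
  set 𝒜 := {A | IsClosed A ∧ ∀ P ∈ F, ∀ᵐ ω ∂P, ΔS ω ∈ A}
  obtain ⟨T, hTc, hT𝒜, hTU⟩ := TopologicalSpace.isOpen_sUnion_countable (compl '' 𝒜)
    (by rintro _ ⟨_, hA, rfl⟩; exact hA.1.isOpen_compl)
  have hcompl : (qsSupport F ΔS)ᶜ = ⋃₀ T := by rw [hTU, qsSupport, compl_sInter]
  rw [ae_iff]
  change P (ΔS ⁻¹' (qsSupport F ΔS)ᶜ) = 0
  rw [hcompl, preimage_sUnion, measure_biUnion_null_iff hTc]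
  rintro _ ht
  obtain ⟨A, hA, rfl⟩ := hT𝒜 ht
  exact ae_iff.mp (hA.2 P hP)

lemma qsSupport_singleton_subset_of_ac (h : P ≪ R) :
    qsSupport {P} ΔS ⊆ qsSupport {R} ΔS :=
  sInter_subset_sInter fun _ hA =>
    ⟨hA.1, by rintro _ rfl; exact h.ae_le (hA.2 R (mem_singleton R))⟩

lemma NperpOne_le_iff_ae (V : Submodule ℝ (EuclideanSpace ℝ (Fin d))) :
    NperpOne Q ΔS ≤ V ↔ ∀ᵐ ω ∂Q, ΔS ω ∈ V := by
  refine ⟨fun h => ?_, fun h => ?_⟩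
  · filter_upwards [ae_mem_qsSupport (mem_singleton Q)] with ω hω
    exact h (Submodule.subset_span hω)
  · exact Submodule.span_le.mpr <| qsSupport_subset_of_ae V.closed_of_finiteDimensional
      (by rintro _ rfl; exact h)

lemma NperpOne_mono_of_ac (h : P ≪ R) : NperpOne P ΔS ≤ NperpOne R ΔS :=
  Submodule.span_mono (qsSupport_singleton_subset_of_ac h)

lemma NperpOne_le_span_qsSupport (hQ : Q ∈ F) :
    NperpOne Q ΔS ≤ Submodule.span ℝ (qsSupport F ΔS) :=
  Submodule.span_mono (qsSupport_mono (singleton_subset_iff.mpr hQ))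

end QuasiSureSupport

section ConvexFamily

variable {Ω : Type*} [MeasurableSpace Ω] {d : ℕ} {Pfam : Set (Measure Ω)}
  {ΔS : Ω → EuclideanSpace ℝ (Fin d)} {P' : Measure Ω}

lemma exists_not_ae_mem_of_lt_span_qsSupport {V : Submodule ℝ (EuclideanSpace ℝ (Fin d))}
    (hV : V < Submodule.span ℝ (qsSupport Pfam ΔS)) :
    ∃ Q ∈ Pfam, ¬ ∀ᵐ ω ∂Q, ΔS ω ∈ V := by
  by_contra! h
  exact hV.not_ge <| Submodule.span_le.mpr <|
    qsSupport_subset_of_ae V.closed_of_finiteDimensional h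

lemma exists_ac_NperpOne_lt
    (hconvex : ∀ P ∈ Pfam, ∀ P'' ∈ Pfam, ∀ a b : ℝ≥0∞, a + b = 1 → a • P + b • P'' ∈ Pfam)
    (hP' : P' ∈ Pfam) (hproper : NperpOne P' ΔS < Submodule.span ℝ (qsSupport Pfam ΔS)) :
    ∃ R ∈ Pfam, P' ≪ R ∧ NperpOne P' ΔS < NperpOne R ΔS := by
  obtain ⟨R₁, hR₁, hcharge⟩ := exists_not_ae_mem_of_lt_span_qsSupport hproper
  have hhalf : (2⁻¹ : ℝ≥0∞) ≠ 0 := by simp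
  set R := (2⁻¹ : ℝ≥0∞) • P' + (2⁻¹ : ℝ≥0∞) • R₁
  have hac : P' ≪ R := (Measure.absolutelyContinuous_smul hhalf).add_right _
  refine ⟨R, hconvex _ hP' _ hR₁ _ _ ENNReal.inv_two_add_inv_two, hac,
    (NperpOne_mono_of_ac hac).lt_of_ne fun heq => hcharge ?_⟩
  have hR := (NperpOne_le_iff_ae _).mp heq.ge
  rw [ae_add_measure_iff, Measure.ae_ennreal_smul_measure_iff hhalf] at hR
  exact (Measure.ae_ennreal_smul_measure_iff hhalf).mp hR.2

lemma exists_ac_NperpOne_eq_span_qsSupport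
    (hconvex : ∀ P ∈ Pfam, ∀ P'' ∈ Pfam, ∀ a b : ℝ≥0∞, a + b = 1 → a • P + b • P'' ∈ Pfam)
    (hP' : P' ∈ Pfam) :
    ∃ P'' ∈ Pfam, P' ≪ P'' ∧ NperpOne P'' ΔS = Submodule.span ℝ (qsSupport Pfam ΔS) := by
  obtain ⟨_, ⟨P'', ⟨hP'', hac⟩, rfl⟩, hmax⟩ := wellFounded_gt.has_min
    ((fun R => NperpOne R ΔS) '' {R | R ∈ Pfam ∧ P' ≪ R}) ⟨_, P', ⟨hP', .rfl⟩, rfl⟩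
  refine ⟨P'', hP'', hac, (NperpOne_le_span_qsSupport hP'').eq_of_not_lt fun hlt => ?_⟩
  obtain ⟨R, hR, hacR, hltR⟩ := exists_ac_NperpOne_lt hconvex hP'' hlt
  exact hmax _ ⟨R, ⟨hR, hac.trans hacR⟩, rfl⟩ hltR

end ConvexFamily

theorem stmt8_general {Ω : Type*} [MeasurableSpace Ω]
    {d : ℕ} (Pfam : Set (Measure Ω))
    (hconvex : ∀ P ∈ Pfam, ∀ P'' ∈ Pfam, ∀ a b : ℝ≥0∞, a + b = 1 → a • P + b • P'' ∈ Pfam)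
    (ΔS : Ω → EuclideanSpace ℝ (Fin d))
    (P' : Measure Ω) (hP' : P' ∈ Pfam)
    (hproper : NperpOne P' ΔS < Submodule.span ℝ (qsSupport Pfam ΔS)) :
    (∃ R ∈ Pfam, P' ≪ R ∧ NperpOne P' ΔS < NperpOne R ΔS) ∧
    (∃ P'' ∈ Pfam, P' ≪ P'' ∧ NperpOne P'' ΔS = Submodule.span ℝ (qsSupport Pfam ΔS)) :=
  ⟨exists_ac_NperpOne_lt hconvex hP' hproper, exists_ac_NperpOne_eq_span_qsSupport hconvex hP'⟩

/-- if `N⊥(P')` is a proper subspace of `N⊥(𝒫)`, then one can strictly enlarge it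
by a dominating measure in the convex family, and by iterating reach `P'' ∈ 𝒫` with
`P' ≪ P''` and `N⊥(P'') = N⊥(𝒫)`. -/
theorem stmt8 {Ω : Type*} [TopologicalSpace Ω] [PolishSpace Ω] [MeasurableSpace Ω] [BorelSpace Ω]
    {d : ℕ} (Pfam : Set (Measure Ω))
    (hprob : ∀ P ∈ Pfam, IsProbabilityMeasure P)
    (hconvex : ∀ P ∈ Pfam, ∀ P'' ∈ Pfam, ∀ a b : ℝ≥0∞, a + b = 1 → a • P + b • P'' ∈ Pfam)
    (ΔS : Ω → EuclideanSpace ℝ (Fin d)) (hmeas : Measurable ΔS)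
    (P' : Measure Ω) (hP' : P' ∈ Pfam)
    (hproper : NperpOne P' ΔS < Submodule.span ℝ (qsSupport Pfam ΔS)) :
    (∃ R ∈ Pfam, P' ≪ R ∧ NperpOne P' ΔS < NperpOne R ΔS) ∧
    (∃ P'' ∈ Pfam, P' ≪ P'' ∧ NperpOne P'' ΔS = Submodule.span ℝ (qsSupport Pfam ΔS)) :=
  stmt8_general Pfam hconvex ΔS P' hP' hproper
end
end

section
/- Let X and Y be Borel spaces (Polish), S : X × Y → ℝ^d Borel, and 𝔥 : X ⇉ ℝ^d a set-valued map with nonempty compact values that is measurable (i.e., {x : 𝔥(x) ∩ A ≠ ∅} is Borel for every closed A ⊆ ℝ^d). Then the map φ : {(x,Q) ∈ X × 𝔓(Y) : E_Q|S(x,·)| < ∞} → ℝ given by φ(x,Q) = sup_{y ∈ 𝔥(x)} y·E_Q[S(x,·)] is Borel measurable, where 𝔓(Y) carries the topology of weak convergence. -/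
open MeasureTheory Set
open scoped RealInnerProductSpace ENNReal

noncomputable section

/-!
The map `(x, Q) ↦ (E_Q[S(x,·)], x)` is measurable: `Q ↦ Q G` is lower semicontinuous for
weak convergence when `G` is open (portmanteau), so `(x, Q) ↦ Q` is a measurable kernel and
integrals against it depend measurably on `(x, Q)`. The value `(v, x) ↦ sup_{w ∈ 𝔥 x} ⟪w, v⟫`
is continuous in `v` (the sup of a jointly continuous function over a compact set) and
measurable in `x`, since for compact values the sup is attained and
`{x | c ≤ sup} = {x | 𝔥 x ∩ {w | c ≤ ⟪w, v⟫} ≠ ∅}`; Carathéodory functions are jointly measurable.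
-/

open Filter ProbabilityTheory

namespace MeasureTheory.ProbabilityMeasure

variable {Ω : Type*} [TopologicalSpace Ω] [MeasurableSpace Ω] [HasOuterApproxClosed Ω]

theorem lowerSemicontinuous_toMeasure_apply [OpensMeasurableSpace Ω] {G : Set Ω}
    (hG : IsOpen G) : LowerSemicontinuous fun Q : ProbabilityMeasure Ω => (Q : Measure Ω) G :=
  fun Q _ hc => eventually_lt_of_lt_liminf <|
    hc.trans_le (le_liminf_measure_open_of_tendsto tendsto_id hG)

theorem measurable_toMeasure_of_borel [BorelSpace Ω] :
    Measurable[borel (ProbabilityMeasure Ω)] fun Q : ProbabilityMeasure Ω => (Q : Measure Ω) := by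
  let _ : MeasurableSpace (ProbabilityMeasure Ω) := borel _
  have : BorelSpace (ProbabilityMeasure Ω) := ⟨rfl⟩
  exact .measure_of_isPiSystem_of_isProbabilityMeasure BorelSpace.measurable_eq isPiSystem_isOpen
    fun _ hG => (lowerSemicontinuous_toMeasure_apply hG).measurable

end MeasureTheory.ProbabilityMeasure

section MeasurableMaximum

variable {V E X : Type*} [TopologicalSpace V] [TopologicalSpace.MetrizableSpace V]
  [SecondCountableTopology V] [MeasurableSpace V] [OpensMeasurableSpace V]
  [TopologicalSpace E] [MeasurableSpace X]

theorem le_sSup_image_iff_inter_nonempty {f : E → ℝ} (hf : Continuous f) {K : Set E}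
    (hne : K.Nonempty) (hK : IsCompact K) (c : ℝ) :
    c ≤ sSup (f '' K) ↔ (K ∩ {w | c ≤ f w}).Nonempty := by
  constructor
  · intro hc
    obtain ⟨w, hw, hfw⟩ := (hK.image hf).sSup_mem (hne.image f)
    exact ⟨w, hw, by rwa [mem_ofPred_eq, hfw]⟩
  · rintro ⟨w, hw, hcw⟩
    exact hcw.trans (le_csSup ((hK.image hf).bddAbove) (mem_image_of_mem f hw))

/-- The measurable maximum theorem for a jointly continuous objective. -/
theorem measurable_sSup_image_of_isCompact (f : V → E → ℝ) (hf : Continuous (Function.uncurry f))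
    (K : X → Set E) (hne : ∀ x, (K x).Nonempty) (hcpt : ∀ x, IsCompact (K x))
    (hK : ∀ A : Set E, IsClosed A → MeasurableSet {x | (K x ∩ A).Nonempty}) :
    Measurable fun p : V × X => sSup (f p.1 '' K p.2) := by
  have hfv : ∀ v, Continuous (f v) := fun v => hf.comp (Continuous.prodMk_right v)
  refine (stronglyMeasurable_uncurry_of_continuous_of_stronglyMeasurable
    (u := fun v x => sSup (f v '' K x)) (fun x => (hcpt x).continuous_sSup hf)
    fun v => Measurable.stronglyMeasurable ?_).measurable
  refine measurable_of_Ici fun c => ?_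
  simp only [preimage, mem_Ici, le_sSup_image_iff_inter_nonempty (hfv v) (hne _) (hcpt _)]
  exact hK _ (isClosed_le continuous_const (hfv v))

end MeasurableMaximum

theorem stmt14_general {X Y : Type*}
    [MeasurableSpace X]
    [TopologicalSpace Y] [PolishSpace Y] [MeasurableSpace Y] [BorelSpace Y]
    {d : ℕ} (S : X → Y → EuclideanSpace ℝ (Fin d))
    (hS : Measurable (Function.uncurry S))
    (𝔥 : X → Set (EuclideanSpace ℝ (Fin d)))
    (hne : ∀ x, (𝔥 x).Nonempty) (hcpt : ∀ x, IsCompact (𝔥 x))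
    (hmeas : ∀ A : Set (EuclideanSpace ℝ (Fin d)), IsClosed A →
      MeasurableSet {x | (𝔥 x ∩ A).Nonempty}) :
    ∀ B : Set ℝ, MeasurableSet B →
      MeasurableSet[@Prod.instMeasurableSpace X (ProbabilityMeasure Y) _
          (borel (ProbabilityMeasure Y))]
        {p : X × ProbabilityMeasure Y |
          Integrable (fun y => ‖S p.1 y‖) (p.2 : Measure Y) ∧
          sSup {r : ℝ | ∃ v ∈ 𝔥 p.1, r = ⟪v, ∫ y, S p.1 y ∂(p.2 : Measure Y)⟫} ∈ B} := by
  intro B hB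
  let _ : MeasurableSpace (ProbabilityMeasure Y) := borel _
  let κ : Kernel (X × ProbabilityMeasure Y) Y :=
    ⟨fun p => p.2, ProbabilityMeasure.measurable_toMeasure_of_borel.comp measurable_snd⟩
  have : IsMarkovKernel κ := ⟨fun p => inferInstanceAs (IsProbabilityMeasure (p.2 : Measure Y))⟩
  have hSκ : StronglyMeasurable fun q : (X × ProbabilityMeasure Y) × Y => S q.1.1 q.2 :=
    (hS.comp (measurable_fst.fst.prodMk measurable_snd)).stronglyMeasurable
  have hint : MeasurableSet {p | Integrable (fun y => ‖S p.1 y‖) (κ p)} :=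
    measurableSet_kernel_integrable hSκ.norm
  have hmean : Measurable fun p => ∫ y, S p.1 y ∂κ p :=
    hSκ.integral_kernel_prod_right'.measurable
  have hφ : Measurable fun p : X × ProbabilityMeasure Y =>
      sSup ((fun w => ⟪w, ∫ y, S p.1 y ∂κ p⟫) '' 𝔥 p.1) :=
    (measurable_sSup_image_of_isCompact (fun v w => ⟪w, v⟫) (by fun_prop) 𝔥 hne hcpt
      hmeas).comp (hmean.prodMk measurable_fst)
  convert hint.inter (hφ hB) using 1
  ext p
  simp only [mem_inter_iff, mem_preimage, mem_ofPred_eq, image, eq_comm]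
  rfl

/-- Proposition 3.1: for a measurable compact-valued nonempty correspondence
`𝔥`, the constrained support function `φ(x,Q) = sup_{y ∈ 𝔥(x)} y·E_Q[S(x,·)]` is Borel
measurable on `{(x,Q) : E_Q|S(x,·)| < ∞}`, where the space of probability measures carries
the Borel σ-algebra of the topology of weak convergence. -/
theorem stmt14 {X Y : Type*}
    [TopologicalSpace X] [PolishSpace X] [MeasurableSpace X] [BorelSpace X]
    [TopologicalSpace Y] [PolishSpace Y] [MeasurableSpace Y] [BorelSpace Y]
    {d : ℕ} (S : X → Y → EuclideanSpace ℝ (Fin d))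
    (hS : Measurable (Function.uncurry S))
    (𝔥 : X → Set (EuclideanSpace ℝ (Fin d)))
    (hne : ∀ x, (𝔥 x).Nonempty) (hcpt : ∀ x, IsCompact (𝔥 x))
    (hmeas : ∀ A : Set (EuclideanSpace ℝ (Fin d)), IsClosed A →
      MeasurableSet {x | (𝔥 x ∩ A).Nonempty}) :
    ∀ B : Set ℝ, MeasurableSet B →
      MeasurableSet[@Prod.instMeasurableSpace X (ProbabilityMeasure Y) _
          (borel (ProbabilityMeasure Y))]
        {p : X × ProbabilityMeasure Y |
          Integrable (fun y => ‖S p.1 y‖) (p.2 : Measure Y) ∧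
          sSup {r : ℝ | ∃ v ∈ 𝔥 p.1, r = ⟪v, ∫ y, S p.1 y ∂(p.2 : Measure Y)⟫} ∈ B} :=
  stmt14_general S hS 𝔥 hne hcpt hmeas
end
end

section
/- Let X be a Polish space, S : X × Ω → ℝ^d Borel (Ω Polish), and 𝔥 : X ⇉ ℝ^d a set-valued map with Borel graph such that there is a countable set (y_n) ⊆ ℝ^d with: for every x and every y ∈ 𝔥(x) there is a subsequence of (y_n) contained in 𝔥(x) converging to y. Then (x,Q) ↦ sup_{y ∈ 𝔥(x)} y·E_Q[S(x,·)] is Borel measurable on {(x,Q) : E_Q|S(x,·)| < ∞}, being equal to sup_n φ(y_n, x, Q) where φ(y,x,Q) = y·E_Q[S(x,·)] if y ∈ 𝔥(x) and −∞ otherwise. -/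
/-!
The supremum of a continuous function over `𝔥 x` is already attained, in the closure, on the
points `y_n ∈ 𝔥 x`, so it equals the countable supremum `⨆ n, φ(y_n, x, Q)`. Each `φ(y_n, ·, ·)`
is Borel: `{x | y_n ∈ 𝔥 x}` is a section of the Borel graph, and `(x, Q) ↦ E_Q[S(x,·)]` is a
kernel integral, because `Q ↦ Q(t)` is a Borel function of `Q` for the weak topology (it is the
decreasing limit of `Q ↦ ∫ f_k dQ` for continuous `f_k ↓ 𝟙_t` when `t` is closed, and closed sets
form a π-system generating the Borel sets).
-/

open MeasureTheory ProbabilityTheory Set Filter Topology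
open scoped RealInnerProductSpace ENNReal

theorem sSup_image_eq_iSup_ite_of_subset_closure {E α : Type*} [TopologicalSpace E]
    [CompleteLinearOrder α] [TopologicalSpace α] [OrderClosedTopology α]
    {f : E → α} (hf : Continuous f) {A : Set E} {u : ℕ → E}
    [DecidablePred (· ∈ A)] (hA : A ⊆ closure (u '' {n | u n ∈ A})) :
    sSup (f '' A) = ⨆ n, if u n ∈ A then f (u n) else ⊥ := by
  refine le_antisymm (sSup_le ?_) (iSup_le fun n => ?_)
  · rintro _ ⟨v, hv, rfl⟩
    refine closure_minimal ?_ (isClosed_le hf continuous_const) (hA hv)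
    rintro _ ⟨n, hn, rfl⟩
    exact le_iSup_of_le n (if_pos (show u n ∈ A from hn)).ge
  · split_ifs with hn
    · exact le_sSup (mem_image_of_mem f hn)
    · exact bot_le

theorem sSup_setOf_exists_mem_eq_iSup_ite {E α : Type*} [TopologicalSpace E]
    [CompleteLinearOrder α] [TopologicalSpace α] [OrderClosedTopology α]
    {f : E → α} (hf : Continuous f) {A : Set E} {u : ℕ → E} [DecidablePred (· ∈ A)]
    (hA : ∀ y ∈ A, ∃ φ : ℕ → ℕ, (∀ k, u (φ k) ∈ A) ∧ Tendsto (u ∘ φ) atTop (𝓝 y)) :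
    sSup {r | ∃ v ∈ A, r = f v} = ⨆ n, if u n ∈ A then f (u n) else ⊥ := by
  have hclosure : A ⊆ closure (u '' {n | u n ∈ A}) := fun y hy =>
    let ⟨φ, hmem, hlim⟩ := hA y hy
    mem_closure_of_tendsto hlim (Eventually.of_forall fun k => ⟨φ k, hmem k, rfl⟩)
  rw [← sSup_image_eq_iSup_ite_of_subset_closure hf hclosure]
  congr 1
  ext r
  simp [eq_comm]

theorem MeasureTheory.ProbabilityMeasure.measurable_toMeasure_borel {Ω : Type*} [TopologicalSpace Ω]
    [HasOuterApproxClosed Ω] [MeasurableSpace Ω] [BorelSpace Ω] :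
    Measurable[borel (ProbabilityMeasure Ω)] ((↑) : ProbabilityMeasure Ω → Measure Ω) := by
  let _ := borel (ProbabilityMeasure Ω)
  have : BorelSpace (ProbabilityMeasure Ω) := ⟨rfl⟩
  refine Measurable.measure_of_isPiSystem_of_isProbabilityMeasure
    (BorelSpace.measurable_eq.trans borel_eq_generateFrom_isClosed) isPiSystem_isClosed
    fun t ht => ENNReal.measurable_of_tendsto
      (fun k => (ProbabilityMeasure.continuous_lintegral_boundedContinuousFunction _).measurable)
      (tendsto_pi_nhds.2 fun μ => HasOuterApproxClosed.tendsto_lintegral_apprSeq ht μ)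

section MeasurableFamily

variable {α β E : Type*} [MeasurableSpace α] [MeasurableSpace β] [NormedAddCommGroup E]
  {μ : α → Measure β} [∀ a, IsProbabilityMeasure (μ a)] {f : α → β → E}

theorem measurableSet_integrable_of_measurable (hμ : Measurable μ)
    (hf : StronglyMeasurable (Function.uncurry f)) :
    MeasurableSet {a | Integrable (f a) (μ a)} :=
  haveI : IsMarkovKernel ⟨μ, hμ⟩ := ⟨‹_›⟩
  measurableSet_kernel_integrable (κ := ⟨μ, hμ⟩) hf

theorem MeasureTheory.StronglyMeasurable.integral_prod_right_of_measurable [NormedSpace ℝ E]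
    (hμ : Measurable μ) (hf : StronglyMeasurable (Function.uncurry f)) :
    StronglyMeasurable fun a => ∫ b, f a b ∂μ a :=
  haveI : IsMarkovKernel ⟨μ, hμ⟩ := ⟨‹_›⟩
  StronglyMeasurable.integral_kernel_prod_right (κ := ⟨μ, hμ⟩) hf

end MeasurableFamily

open scoped Classical

theorem stmt15_general {X Y : Type*}
    [MeasurableSpace X]
    [TopologicalSpace Y] [PolishSpace Y] [MeasurableSpace Y] [BorelSpace Y]
    {d : ℕ} (S : X → Y → EuclideanSpace ℝ (Fin d))
    (hS : Measurable (Function.uncurry S))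
    (𝔥 : X → Set (EuclideanSpace ℝ (Fin d)))
    (hgraph : MeasurableSet {p : X × EuclideanSpace ℝ (Fin d) | p.2 ∈ 𝔥 p.1})
    (yseq : ℕ → EuclideanSpace ℝ (Fin d))
    (hdense : ∀ x, ∀ y ∈ 𝔥 x, ∃ φ : ℕ → ℕ, StrictMono φ ∧ (∀ k, yseq (φ k) ∈ 𝔥 x) ∧
      Filter.Tendsto (fun k => yseq (φ k)) Filter.atTop (nhds y)) :
    -- the support function equals the countable supremum on the integrability set
    (∀ p : X × ProbabilityMeasure Y, Integrable (fun y => ‖S p.1 y‖) (p.2 : Measure Y) →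
      sSup {r : EReal | ∃ v ∈ 𝔥 p.1,
          r = ((⟪v, ∫ y, S p.1 y ∂(p.2 : Measure Y)⟫ : ℝ) : EReal)} =
        ⨆ n, (if yseq n ∈ 𝔥 p.1
          then ((⟪yseq n, ∫ y, S p.1 y ∂(p.2 : Measure Y)⟫ : ℝ) : EReal) else ⊥)) ∧
    -- and it is Borel measurable on that set
    (∀ B : Set EReal, MeasurableSet B →
      MeasurableSet[@Prod.instMeasurableSpace X (ProbabilityMeasure Y) _
          (borel (ProbabilityMeasure Y))]
        {p : X × ProbabilityMeasure Y |
          Integrable (fun y => ‖S p.1 y‖) (p.2 : Measure Y) ∧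
          sSup {r : EReal | ∃ v ∈ 𝔥 p.1,
            r = ((⟪v, ∫ y, S p.1 y ∂(p.2 : Measure Y)⟫ : ℝ) : EReal)} ∈ B}) := by
  have hsup : ∀ p : X × ProbabilityMeasure Y,
      sSup {r : EReal | ∃ v ∈ 𝔥 p.1,
          r = ((⟪v, ∫ y, S p.1 y ∂(p.2 : Measure Y)⟫ : ℝ) : EReal)} =
        ⨆ n, (if yseq n ∈ 𝔥 p.1
          then ((⟪yseq n, ∫ y, S p.1 y ∂(p.2 : Measure Y)⟫ : ℝ) : EReal) else ⊥) :=
    fun p => sSup_setOf_exists_mem_eq_iSup_ite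
      (continuous_coe_real_ereal.comp (continuous_id.inner continuous_const)) fun y hy =>
        let ⟨φ, _, hmem, hlim⟩ := hdense p.1 y hy; ⟨φ, hmem, hlim⟩
  refine ⟨fun p _ => hsup p, fun B hB => ?_⟩
  let _ := borel (ProbabilityMeasure Y)
  have hμ : Measurable fun p : X × ProbabilityMeasure Y => (p.2 : Measure Y) :=
    ProbabilityMeasure.measurable_toMeasure_borel.comp measurable_snd
  have hS' : Measurable (Function.uncurry fun (p : X × ProbabilityMeasure Y) y => S p.1 y) :=
    hS.comp ((measurable_fst.comp measurable_fst).prodMk measurable_snd)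
  have hmean : Measurable fun p : X × ProbabilityMeasure Y => ∫ y, S p.1 y ∂(p.2 : Measure Y) :=
    (StronglyMeasurable.integral_prod_right_of_measurable hμ hS'.stronglyMeasurable).measurable
  have hφ : ∀ n, Measurable fun p : X × ProbabilityMeasure Y => if yseq n ∈ 𝔥 p.1
      then ((⟪yseq n, ∫ y, S p.1 y ∂(p.2 : Measure Y)⟫ : ℝ) : EReal) else ⊥ := fun n =>
    Measurable.ite (hgraph.preimage (measurable_fst.prodMk measurable_const))
      (measurable_coe_real_ereal.comp (measurable_const.inner hmean)) measurable_const
  have hnorm : Measurable (Function.uncurry fun (p : X × ProbabilityMeasure Y) y => ‖S p.1 y‖) :=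
    hS'.norm
  have hint := measurableSet_integrable_of_measurable hμ hnorm.stronglyMeasurable
  simp_rw [hsup]
  exact hint.inter (Measurable.iSup hφ hB)

/-- Proposition 3.2: a countable-density criterion for Borel measurability of
the constrained support function `(x,Q) ↦ sup_{y ∈ 𝔥(x)} y·E_Q[S(x,·)]`, which then equals
`sup_n φ(y_n,x,Q)` with `φ(y,x,Q) = y·E_Q[S(x,·)]` for `y ∈ 𝔥(x)` and `-∞` otherwise. -/
theorem stmt15 {X Y : Type*}
    [TopologicalSpace X] [PolishSpace X] [MeasurableSpace X] [BorelSpace X]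
    [TopologicalSpace Y] [PolishSpace Y] [MeasurableSpace Y] [BorelSpace Y]
    {d : ℕ} (S : X → Y → EuclideanSpace ℝ (Fin d))
    (hS : Measurable (Function.uncurry S))
    (𝔥 : X → Set (EuclideanSpace ℝ (Fin d)))
    (hgraph : MeasurableSet {p : X × EuclideanSpace ℝ (Fin d) | p.2 ∈ 𝔥 p.1})
    (yseq : ℕ → EuclideanSpace ℝ (Fin d))
    (hdense : ∀ x, ∀ y ∈ 𝔥 x, ∃ φ : ℕ → ℕ, StrictMono φ ∧ (∀ k, yseq (φ k) ∈ 𝔥 x) ∧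
      Filter.Tendsto (fun k => yseq (φ k)) Filter.atTop (nhds y)) :
    -- the support function equals the countable supremum on the integrability set
    (∀ p : X × ProbabilityMeasure Y, Integrable (fun y => ‖S p.1 y‖) (p.2 : Measure Y) →
      sSup {r : EReal | ∃ v ∈ 𝔥 p.1,
          r = ((⟪v, ∫ y, S p.1 y ∂(p.2 : Measure Y)⟫ : ℝ) : EReal)} =
        ⨆ n, (if yseq n ∈ 𝔥 p.1
          then ((⟪yseq n, ∫ y, S p.1 y ∂(p.2 : Measure Y)⟫ : ℝ) : EReal) else ⊥)) ∧
    -- and it is Borel measurable on that set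
    (∀ B : Set EReal, MeasurableSet B →
      MeasurableSet[@Prod.instMeasurableSpace X (ProbabilityMeasure Y) _
          (borel (ProbabilityMeasure Y))]
        {p : X × ProbabilityMeasure Y |
          Integrable (fun y => ‖S p.1 y‖) (p.2 : Measure Y) ∧
          sSup {r : EReal | ∃ v ∈ 𝔥 p.1,
            r = ((⟪v, ∫ y, S p.1 y ∂(p.2 : Measure Y)⟫ : ℝ) : EReal)} ∈ B}) :=
  stmt15_general S hS 𝔥 hgraph yseq hdense
end
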